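/- arXiv:1911.08849 — 4 statements merged into one kernel-verified Lean document; each statement's English description precedes it below -/
import Mathlib

section
/- In a weighted directed graph where the score of a node is the average of the weights of its incoming edges (and 0 if it has none), changing the weights on the outgoing edges of a single node x of out-degree at most Δ changes the scores of at most Δ nodes, and hence changes the ranking of x (the number of nodes with strictly greater score) by at most Δ. -/
open Finset
open scoped Classical

/-- The in-edges of a node `x` in the edge set `E`. -/
def inEdges {V : Type*} [DecidableEq V] (E : Finset (V × V)) (x : V) : Finset (V × V) :=
  E.filter (fun e => e.2 = x)

/-- The out-edges of a node `x` in the edge set `E`. -/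
def outEdges {V : Type*} [DecidableEq V] (E : Finset (V × V)) (x : V) : Finset (V × V) :=
  E.filter (fun e => e.1 = x)

/-- The score of a node: the average of the weights of its in-edges, 0 if it has none. -/
noncomputable def score {V : Type*} [DecidableEq V] (E : Finset (V × V)) (w : V × V → ℝ)
    (x : V) : ℝ :=
  if inEdges E x = ∅ then 0 else (∑ e ∈ inEdges E x, w e) / (inEdges E x).card

/-- The ranking of a node: the number of nodes with strictly greater score. -/
noncomputable def rank {V : Type*} [Fintype V] [DecidableEq V] (E : Finset (V × V))
    (w : V × V → ℝ) (x : V) : ℕ :=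
  (Finset.univ.filter (fun y => score E w y > score E w x)).card

/-! Only the heads of `x`'s out-edges have an in-edge whose weight can change, so at most `Δ`
scores move. Since there are no self-loops, the score of `x` is not among them, and a node can
cross the level of `x` only if its own score moved. -/

section Counting

variable {V α : Type*} [Fintype V] [LinearOrder α]

lemma card_lt_le_card_lt_add_card_ne (f g : V → α) (c : α) :
    #{y | c < g y} ≤ #{y | c < f y} + #{y | f y ≠ g y} := by
  calc #{y | c < g y} ≤ #(({y | c < f y} : Finset V) ∪ ({y | f y ≠ g y} : Finset V)) := by
        refine card_le_card fun y hy => ?_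
        simp only [mem_union, mem_filter, mem_univ, true_and] at hy ⊢
        by_cases hfg : f y = g y
        · exact .inl (hfg ▸ hy)
        · exact .inr hfg
    _ ≤ _ := card_union_le _ _

end Counting

section Score

variable {V : Type*} [DecidableEq V] (E : Finset (V × V)) {w w' : V × V → ℝ}

lemma score_congr {y : V} (h : ∀ e ∈ inEdges E y, w e = w' e) : score E w y = score E w' y := by
  rw [score, score, sum_congr rfl h]

variable {E} {x : V} (hagree : ∀ e ∈ E, e.1 ≠ x → w e = w' e)
include hagree

lemma mem_of_score_ne {y : V} (hy : score E w y ≠ score E w' y) : (x, y) ∈ E := by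
  by_contra hxy
  refine hy (score_congr E fun e he => hagree e (mem_filter.1 he).1 fun hex => hxy ?_)
  obtain ⟨heE, hey⟩ := mem_filter.1 he
  rwa [← hex, ← hey]

lemma score_eq_of_loopless (hloop : ∀ e ∈ E, e.1 ≠ e.2) : score E w x = score E w' x :=
  score_congr E fun e he => by
    obtain ⟨heE, hex⟩ := mem_filter.1 he
    exact hagree e heE (hex ▸ hloop e heE)

lemma card_score_ne_le_card_outEdges [Fintype V] :
    #{y | score E w y ≠ score E w' y} ≤ #(outEdges E x) :=
  card_le_card_of_injOn (fun y => (x, y))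
    (fun _ hy => mem_filter.2 ⟨mem_of_score_ne hagree (mem_filter.1 hy).2, rfl⟩)
    (fun _ _ _ _ h => (Prod.ext_iff.1 h).2)

end Score

theorem out_edge_change_bound_general {V : Type*} [Fintype V] [DecidableEq V]
    (E : Finset (V × V)) (Δ : ℕ)
    (hloop : ∀ e ∈ E, e.1 ≠ e.2)
    (hdeg : ∀ y : V, (outEdges E y).card ≤ Δ)
    (w w' : V × V → ℝ)
    (x : V) (hagree : ∀ e ∈ E, e.1 ≠ x → w e = w' e) :
    (Finset.univ.filter (fun y => score E w y ≠ score E w' y)).card ≤ Δ ∧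
      rank E w' x ≤ rank E w x + Δ ∧ rank E w x ≤ rank E w' x + Δ := by
  have hchanged := (card_score_ne_le_card_outEdges hagree).trans (hdeg x)
  have hx := score_eq_of_loopless hagree hloop
  have hchanged' : #{y | score E w' y ≠ score E w y} ≤ Δ := by
    simpa only [ne_comm] using hchanged
  refine ⟨hchanged, ?_, ?_⟩
  · have := card_lt_le_card_lt_add_card_ne (score E w) (score E w') (score E w x)
    rw [rank, rank, ← hx]
    exact this.trans (Nat.add_le_add_left hchanged _)
  · have := card_lt_le_card_lt_add_card_ne (score E w') (score E w) (score E w' x)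
    rw [rank, rank, hx]
    exact this.trans (Nat.add_le_add_left hchanged' _)

/-- In a weighted directed graph (no self-loops, weights in [−1,1], out-degrees
at most Δ) where a node's score is the average of its in-edge weights, changing the weights
on the out-edges of a single node x changes the scores of at most Δ nodes, and hence changes
the ranking of x by at most Δ. -/
theorem out_edge_change_bound {V : Type*} [Fintype V] [DecidableEq V]
    (E : Finset (V × V)) (Δ : ℕ)
    (hloop : ∀ e ∈ E, e.1 ≠ e.2)
    (hdeg : ∀ y : V, (outEdges E y).card ≤ Δ)
    (w w' : V × V → ℝ)
    (hw : ∀ e ∈ E, -1 ≤ w e ∧ w e ≤ 1) (hw' : ∀ e ∈ E, -1 ≤ w' e ∧ w' e ≤ 1)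
    (x : V) (hagree : ∀ e ∈ E, e.1 ≠ x → w e = w' e) :
    (Finset.univ.filter (fun y => score E w y ≠ score E w' y)).card ≤ Δ ∧
      rank E w' x ≤ rank E w x + Δ ∧ rank E w x ≤ rank E w' x + Δ :=
  out_edge_change_bound_general E Δ hloop hdeg w w' x hagree
end

section
/- Consider the graph G on n nodes with a distinguished node v, sets A and B each of size (1−α)n/2 whose members each have one edge to v, and a set C of size αn − 1 forming a directed cycle with all weights 1. If edges from A to v have weight 1 and edges from B to v have weight −1 + 1/((1−α)n), then s(v) = 1/(2(1−α)n) > 0, s(a) = s(b) = 0 for a ∈ A, b ∈ B, s(c) = 1 for c ∈ C, and hence I_α(G) = C ∪ {v}. -/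
open Finset
open scoped Classical

/-- In the construction with a distinguished node v, sets A and B of size
(1−α)n/2 each with one edge to v (weights 1 from A, −1 + 1/((1−α)n) from B), and a
1-weighted directed cycle C of size αn − 1, the scores are s(v) = 1/(2(1−α)n) > 0,
s(a) = s(b) = 0, s(c) = 1, and I_α(G) = C ∪ {v}. -/
theorem construction_G {V : Type*} [Fintype V] [DecidableEq V]
    (E : Finset (V × V)) (w : V × V → ℝ) (n : ℕ) (α : ℝ)
    (hn : Fintype.card V = n) (hn0 : 0 < n) (hα0 : 0 < α) (hα1 : α < 1)
    (v : V) (A B C : Finset V)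
    (hAB : Disjoint A B) (hAC : Disjoint A C) (hBC : Disjoint B C)
    (hvA : v ∉ A) (hvB : v ∉ B) (hvC : v ∉ C)
    (hpart : Finset.univ = insert v (A ∪ B ∪ C))
    (hcardA : (A.card : ℝ) = (1 - α) * n / 2) (hcardB : (B.card : ℝ) = (1 - α) * n / 2)
    (hcardC : (C.card : ℝ) = α * n - 1)
    (hinv : inEdges E v = (A ∪ B).image (fun a => (a, v)))
    (hinAB : ∀ a ∈ A ∪ B, inEdges E a = ∅)
    (hinC : ∀ c ∈ C, inEdges E c ≠ ∅ ∧ ∀ e ∈ inEdges E c, w e = 1 ∧ e.1 ∈ C)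
    (hwA : ∀ a ∈ A, w (a, v) = 1)
    (hwB : ∀ b ∈ B, w (b, v) = -1 + 1 / ((1 - α) * n)) :
    score E w v = 1 / (2 * (1 - α) * n) ∧ 0 < score E w v ∧
      (∀ a ∈ A ∪ B, score E w a = 0) ∧ (∀ c ∈ C, score E w c = 1) ∧
      Finset.univ.filter (fun x => (rank E w x : ℝ) < α * n) = insert v C := by
  have h1α : (0:ℝ) < 1 - α := by linarith
  have hn' : (0:ℝ) < n := by exact_mod_cast hn0
  have hden : (0:ℝ) < (1 - α) * n := mul_pos h1α hn'
  have hApos : (0:ℝ) < A.card := by rw [hcardA]; linarith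
  have hAposN : 0 < A.card := by exact_mod_cast hApos
  have hA1 : (1:ℝ) ≤ A.card := by exact_mod_cast hAposN
  have h2 : (2:ℝ) ≤ (1 - α) * n := by linarith [hcardA ▸ hA1]
  have hdne : (1 - α) * n ≠ 0 := hden.ne'
  have hABcard : ((A ∪ B).card : ℝ) = (1 - α) * n := by
    rw [Finset.card_union_of_disjoint hAB]; push_cast; linarith
  have hABne : A ∪ B ≠ ∅ := by
    intro h
    rw [h] at hABcard
    simp only [Finset.card_empty, Nat.cast_zero] at hABcard
    linarith
  have hsum : ∑ e ∈ inEdges E v, w e = 1 / 2 := by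
    rw [hinv, Finset.sum_image (by intro a _ b _ h; exact (Prod.ext_iff.mp h).1),
      Finset.sum_union hAB,
      Finset.sum_congr rfl (fun a ha => hwA a ha),
      Finset.sum_congr rfl (fun b hb => hwB b hb),
      Finset.sum_const, Finset.sum_const, nsmul_eq_mul, nsmul_eq_mul, hcardA, hcardB]
    field_simp
    ring
  have himg : ((inEdges E v).card : ℝ) = (1 - α) * n := by
    rw [hinv, Finset.card_image_of_injective _ (fun a b h => (Prod.ext_iff.mp h).1)]
    exact hABcard
  have hvne : inEdges E v ≠ ∅ := by
    rw [hinv]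
    simpa [Finset.image_eq_empty] using hABne
  have hsv : score E w v = 1 / (2 * (1 - α) * n) := by
    rw [score, if_neg hvne, hsum, himg]
    field_simp
  have hsvpos : (0:ℝ) < 1 / (2 * (1 - α) * n) := by
    apply div_pos one_pos
    linarith
  have hsv1 : 1 / (2 * (1 - α) * n) < 1 := by
    rw [div_lt_one (by linarith)]
    linarith
  have h0 : ∀ a ∈ A ∪ B, score E w a = 0 := fun a ha => by simp [score, hinAB a ha]
  have hsc : ∀ c ∈ C, score E w c = 1 := by
    intro c hc
    obtain ⟨hne, hw⟩ := hinC c hc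
    have hs : ∑ e ∈ inEdges E c, w e = (inEdges E c).card := by
      rw [Finset.sum_congr rfl (fun e he => (hw e he).1), Finset.sum_const, nsmul_eq_mul,
        mul_one]
    have hcne : ((inEdges E c).card : ℝ) ≠ 0 := by
      exact_mod_cast (Finset.card_pos.mpr (Finset.nonempty_iff_ne_empty.mpr hne)).ne'
    rw [score, if_neg hne, hs, div_self hcne]
  have hcases : ∀ x : V, x = v ∨ x ∈ A ∪ B ∨ x ∈ C := by
    intro x
    have hx : x ∈ insert v (A ∪ B ∪ C) := hpart ▸ Finset.mem_univ x
    rcases Finset.mem_insert.mp hx with h | h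
    · exact Or.inl h
    · rcases Finset.mem_union.mp h with h | h
      · exact Or.inr (Or.inl h)
      · exact Or.inr (Or.inr h)
  have hrv : rank E w v = C.card := by
    unfold rank
    congr 1
    ext y
    simp only [Finset.mem_filter, Finset.mem_univ, true_and]
    constructor
    · intro hy
      rcases hcases y with rfl | h | h
      · exact absurd hy (lt_irrefl _)
      · rw [h0 y h, hsv] at hy; linarith
      · exact h
    · intro hy
      rw [hsc y hy, hsv]
      exact hsv1
  have hra : ∀ a ∈ A ∪ B, rank E w a = C.card + 1 := by
    intro a ha
    unfold rank
    have hset : Finset.univ.filter (fun y => score E w y > score E w a) = insert v C := by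
      ext y
      simp only [Finset.mem_filter, Finset.mem_univ, true_and, Finset.mem_insert]
      rw [h0 a ha]
      constructor
      · intro hy
        rcases hcases y with rfl | h | h
        · exact Or.inl rfl
        · rw [h0 y h] at hy; linarith
        · exact Or.inr h
      · rintro (rfl | h)
        · rw [hsv]; exact hsvpos
        · rw [hsc y h]; norm_num
    rw [hset, Finset.card_insert_of_notMem hvC]
  have hrc : ∀ c ∈ C, rank E w c = 0 := by
    intro c hc
    unfold rank
    rw [Finset.card_eq_zero, Finset.filter_eq_empty_iff]
    intro y _
    rw [hsc c hc]
    push_neg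
    rcases hcases y with rfl | h | h
    · rw [hsv]; linarith
    · rw [h0 y h]; linarith
    · rw [hsc y h]
  have hfinal : Finset.univ.filter (fun x => (rank E w x : ℝ) < α * n) = insert v C := by
    ext x
    simp only [Finset.mem_filter, Finset.mem_univ, true_and, Finset.mem_insert]
    constructor
    · intro hx
      rcases hcases x with rfl | h | h
      · exact Or.inl rfl
      · rw [hra x h] at hx; push_cast at hx; linarith
      · exact Or.inr h
    · rintro (rfl | h)
      · rw [hrv]; linarith
      · rw [hrc x h]
        push_cast
        have : (0:ℝ) ≤ C.card := Nat.cast_nonneg _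
        linarith
  exact ⟨hsv, by rw [hsv]; exact hsvpos, h0, hsc, hfinal⟩
end

section
/- Suppose a symmetric incentive-compatible probabilistic mechanism assigns probability μ ∈ [0,1] to each node of A in graph G and (by IC and symmetry) probability μ to each node of B in graph G'. Then on the pair of graphs (G, G') of the above construction, the minimum of the two coincidence values is at most 1 − μ(1−α) and at most α + μ(1−α) respectively, and therefore min over both graphs is at most (1+α)/2, achieved at μ = 1/2. -/
/-!
In `G` every node of `A ∪ B` has no in-edge, hence score `0`, while `C` has score `1` and `v`
has in-weight sum `|A| + |B|(-1 + 1/((1-α)n)) = 1/2 > 0`; so the nodes of `A` have rank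
`|C| + 1 = αn` and lie outside `I_α(G)`. Reweighting the single edge `(a₀, v)` lowers the
in-weight sum of `v` to `1/((1-α)n) - 3/2 < 0`, so in `G'` only `C` lies above `A ∪ B`, and the
rank `|C| < αn` puts `B` inside `I_α(G')`. Against the maximal coincidence `1`, each node of `A`
(probability `μ`, target out) costs `2μ/n` and each node of `B` (target in) costs `2(1-μ)/n`;
with `|A| = |B| = (1-α)n/2` this gives the two bounds, which average to `(1+α)/2`.
-/

open Finset
open scoped Classical

section Score

variable {V : Type*} [DecidableEq V] (E : Finset (V × V)) (w : V × V → ℝ) {x : V}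

theorem score_eq_zero_of_inEdges_eq_empty (h : inEdges E x = ∅) : score E w x = 0 := by
  simp [score, h]

theorem score_eq_one (hne : inEdges E x ≠ ∅) (hw : ∀ e ∈ inEdges E x, w e = 1) :
    score E w x = 1 := by
  have hcard : ((inEdges E x).card : ℝ) ≠ 0 := by
    simpa [Finset.nonempty_iff_ne_empty] using hne
  rw [score, if_neg hne, Finset.sum_congr rfl hw, Finset.sum_const, nsmul_one, div_self hcard]

theorem score_pos_of_sum_pos (h : 0 < ∑ e ∈ inEdges E x, w e) : 0 < score E w x := by
  have hne : inEdges E x ≠ ∅ := by rintro hempty; simp [hempty] at h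
  rw [score, if_neg hne]
  exact div_pos h (by simpa [Finset.nonempty_iff_ne_empty] using hne)

theorem score_neg_of_sum_neg (h : ∑ e ∈ inEdges E x, w e < 0) : score E w x < 0 := by
  have hne : inEdges E x ≠ ∅ := by rintro hempty; simp [hempty] at h
  rw [score, if_neg hne]
  exact div_neg_of_neg_of_pos h (by simpa [Finset.nonempty_iff_ne_empty] using hne)

theorem score_update_of_ne {w' : V × V → ℝ} {e₀ : V × V} {r : ℝ}
    (hw' : ∀ e, w' e = if e = e₀ then r else w e) (hx : e₀.2 ≠ x) :
    score E w' x = score E w x := by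
  have hsame : ∀ e ∈ inEdges E x, w' e = w e := fun e he => by
    have hex : e.2 = x := (Finset.mem_filter.mp he).2
    rw [hw', if_neg (by rintro rfl; exact hx hex)]
  simp only [score, Finset.sum_congr rfl hsame]

theorem sum_inEdges_update_of_mem {w' : V × V → ℝ} {e₀ : V × V} {r : ℝ}
    (hw' : ∀ e, w' e = if e = e₀ then r else w e) (he₀ : e₀ ∈ inEdges E x) :
    ∑ e ∈ inEdges E x, w' e = ∑ e ∈ inEdges E x, w e - w e₀ + r := by
  have hupd : w' = Function.update w e₀ r := funext fun e => by rw [hw', Function.update_apply]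
  rw [hupd, Finset.sum_update_of_mem he₀, Finset.sum_eq_add_sum_sdiff_singleton_of_mem he₀ w]
  ring

theorem rank_eq_card_of_partition [Fintype V] {v : V} {A B C : Finset V}
    (hpart : Finset.univ = insert v (A ∪ B ∪ C))
    (hAB : ∀ a ∈ A ∪ B, score E w a = 0) (hC : ∀ c ∈ C, score E w c = 1)
    (hx : x ∈ A ∪ B) :
    rank E w x = #(if 0 < score E w v then insert v C else C) := by
  have hCpos : ∀ c ∈ C, 0 < score E w c := fun c hc => (hC c hc).symm ▸ one_pos
  simp only [rank, hAB x hx, gt_iff_lt]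
  congr 1
  ext y
  simp only [Finset.mem_filter, Finset.mem_univ, true_and]
  constructor
  · intro hpos
    have hy : y ∈ insert v (A ∪ B ∪ C) := hpart ▸ Finset.mem_univ y
    rcases Finset.mem_insert.mp hy with rfl | hy
    · simp [hpos]
    rcases Finset.mem_union.mp hy with hy | hy
    · exact absurd (hAB y hy) hpos.ne'
    · split_ifs <;> simp [hy]
  · intro hy
    split_ifs at hy with hv
    · rcases Finset.mem_insert.mp hy with rfl | hy
      exacts [hv, hCpos y hy]
    · exact hCpos y hy

theorem sum_inEdges_eq_of_image {v : V} {A B : Finset V} {t : ℝ} (hAB : Disjoint A B)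
    (hinv : inEdges E v = (A ∪ B).image (fun a => (a, v)))
    (hwA : ∀ a ∈ A, w (a, v) = 1) (hwB : ∀ b ∈ B, w (b, v) = -1 + t) :
    ∑ e ∈ inEdges E v, w e = #A - #B + #B * t := by
  rw [hinv, Finset.sum_image (fun _ _ _ _ h => (Prod.ext_iff.mp h).1), Finset.sum_union hAB,
    Finset.sum_congr rfl hwA, Finset.sum_congr rfl hwB]
  simp only [Finset.sum_const, nsmul_eq_mul, mul_one]
  ring

end Score

section Coincidence

variable {V : Type*} [Fintype V]

theorem sum_le_card_sub_of_le_one {f : V → ℝ} {S : Finset V} {c : ℝ} (hf : ∀ x, f x ≤ 1)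
    (hS : ∀ x ∈ S, f x = c) : ∑ x, f x ≤ Fintype.card V - #S * (1 - c) := by
  have hdefect : #S * (1 - c) ≤ ∑ x, (1 - f x) :=
    calc #S * (1 - c) = ∑ x ∈ S, (1 - f x) := by
          rw [Finset.sum_congr rfl fun x hx => by rw [hS x hx]]; simp [mul_sub]
      _ ≤ ∑ x, (1 - f x) := Finset.sum_le_sum_of_subset_of_nonneg (Finset.subset_univ S)
          fun x _ _ => sub_nonneg.mpr (hf x)
  simp only [Finset.sum_sub_distrib, Finset.sum_const, Finset.card_univ, nsmul_one] at hdefect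
  linarith

theorem coincidence_le {p : V → ℝ} (hp : ∀ x, 0 ≤ p x ∧ p x ≤ 1) {I : V → Prop}
    [DecidablePred I] {S : Finset V} {c : ℝ}
    (hS : ∀ x ∈ S, (2 * p x - 1) * (if I x then 1 else -1) = c) :
    (1 / (Fintype.card V : ℝ)) * ∑ x, (2 * p x - 1) * (if I x then (1 : ℝ) else -1) ≤
      1 - #S * (1 - c) / Fintype.card V := by
  have hterm : ∀ x, (2 * p x - 1) * (if I x then (1 : ℝ) else -1) ≤ 1 := fun x => by
    split_ifs <;> linarith [hp x]
  calc (1 / (Fintype.card V : ℝ)) * ∑ x, (2 * p x - 1) * (if I x then (1 : ℝ) else -1)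
      ≤ (1 / (Fintype.card V : ℝ)) * (Fintype.card V - #S * (1 - c)) :=
        mul_le_mul_of_nonneg_left (sum_le_card_sub_of_le_one hterm hS) (by positivity)
    _ = Fintype.card V / Fintype.card V - #S * (1 - c) / Fintype.card V := by ring
    _ ≤ 1 - #S * (1 - c) / Fintype.card V := by gcongr; exact div_self_le_one _

variable [Nonempty V] {p : V → ℝ} {I : V → Prop} [DecidablePred I] {S : Finset V}
  {μ β : ℝ}

theorem coincidence_le_of_forall_mem_not (hp : ∀ x, 0 ≤ p x ∧ p x ≤ 1)
    (hcard : (#S : ℝ) = β * Fintype.card V / 2) (hS : ∀ x ∈ S, p x = μ ∧ ¬ I x) :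
    (1 / (Fintype.card V : ℝ)) * ∑ x, (2 * p x - 1) * (if I x then (1 : ℝ) else -1) ≤
      1 - μ * β := by
  have hV : (Fintype.card V : ℝ) ≠ 0 := Nat.cast_ne_zero.mpr Fintype.card_ne_zero
  refine (coincidence_le hp (S := S) (c := 1 - 2 * μ) fun x hx => ?_).trans_eq ?_
  · rw [if_neg (hS x hx).2, (hS x hx).1]; ring
  · rw [hcard]; field_simp; ring

theorem coincidence_le_of_forall_mem (hp : ∀ x, 0 ≤ p x ∧ p x ≤ 1)
    (hcard : (#S : ℝ) = β * Fintype.card V / 2) (hS : ∀ x ∈ S, p x = μ ∧ I x) :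
    (1 / (Fintype.card V : ℝ)) * ∑ x, (2 * p x - 1) * (if I x then (1 : ℝ) else -1) ≤
      1 - (1 - μ) * β := by
  have hV : (Fintype.card V : ℝ) ≠ 0 := Nat.cast_ne_zero.mpr Fintype.card_ne_zero
  refine (coincidence_le hp (S := S) (c := 2 * μ - 1) fun x hx => ?_).trans_eq ?_
  · rw [if_pos (hS x hx).2, (hS x hx).1]; ring
  · rw [hcard]; field_simp; ring

end Coincidence

theorem min_one_sub_mul_add_mul_le (α μ : ℝ) :
    min (1 - μ * (1 - α)) (α + μ * (1 - α)) ≤ (1 + α) / 2 := by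
  rw [min_le_iff]
  by_contra! h
  linarith [h.1, h.2]

theorem impossibility_half_plus_alpha_general {V : Type*} [Fintype V] [DecidableEq V]
    (E : Finset (V × V)) (w w' : V × V → ℝ) (n : ℕ) (α : ℝ)
    (hn : Fintype.card V = n)
    (v : V) (A B C : Finset V)
    (hAB : Disjoint A B) (hvC : v ∉ C)
    (hpart : Finset.univ = insert v (A ∪ B ∪ C))
    (hcardA : (A.card : ℝ) = (1 - α) * n / 2) (hcardB : (B.card : ℝ) = (1 - α) * n / 2)
    (hcardC : (C.card : ℝ) = α * n - 1)
    (hinv : inEdges E v = (A ∪ B).image (fun a => (a, v)))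
    (hinAB : ∀ a ∈ A ∪ B, inEdges E a = ∅)
    (hinC : ∀ c ∈ C, inEdges E c ≠ ∅ ∧ ∀ e ∈ inEdges E c, w e = 1 ∧ e.1 ∈ C)
    (hwA : ∀ a ∈ A, w (a, v) = 1)
    (hwB : ∀ b ∈ B, w (b, v) = -1 + 1 / ((1 - α) * n))
    (a₀ : V) (ha₀ : a₀ ∈ A)
    (hw' : ∀ e, w' e = if e = (a₀, v) then -1 + 1 / ((1 - α) * n) else w e)
    (hlarge : 1 / ((1 - α) * n) < 3 / 2)
    (μ : ℝ)
    (p p' : V → ℝ)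
    (hp : ∀ x, 0 ≤ p x ∧ p x ≤ 1) (hp' : ∀ x, 0 ≤ p' x ∧ p' x ≤ 1)
    (hpA : ∀ a ∈ A, p a = μ) (hp'B : ∀ b ∈ B, p' b = μ) :
    (1 / (n : ℝ)) * ∑ x : V, (2 * p x - 1) *
        (if (rank E w x : ℝ) < α * n then (1 : ℝ) else -1) ≤ 1 - μ * (1 - α) ∧
      (1 / (n : ℝ)) * ∑ x : V, (2 * p' x - 1) *
          (if (rank E w' x : ℝ) < α * n then (1 : ℝ) else -1) ≤ α + μ * (1 - α) ∧
      min ((1 / (n : ℝ)) * ∑ x : V, (2 * p x - 1) *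
            (if (rank E w x : ℝ) < α * n then (1 : ℝ) else -1))
          ((1 / (n : ℝ)) * ∑ x : V, (2 * p' x - 1) *
            (if (rank E w' x : ℝ) < α * n then (1 : ℝ) else -1))
        ≤ (1 + α) / 2 := by
  have hA : 1 ≤ (A.card : ℝ) := by exact_mod_cast Finset.card_pos.mpr ⟨a₀, ha₀⟩
  obtain ⟨h1α, hn'⟩ : 1 - α ≠ 0 ∧ (n : ℝ) ≠ 0 := mul_ne_zero_iff.mp (by linarith)
  have hsum : ∑ e ∈ inEdges E v, w e = 1 / 2 := by
    rw [sum_inEdges_eq_of_image E w hAB hinv hwA hwB, hcardA, hcardB]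
    field_simp
    ring
  have hmem : (a₀, v) ∈ inEdges E v := by
    rw [hinv]; exact Finset.mem_image_of_mem _ (Finset.mem_union_left _ ha₀)
  have hsum' : ∑ e ∈ inEdges E v, w' e = 1 / ((1 - α) * n) - 3 / 2 := by
    rw [sum_inEdges_update_of_mem E w hw' hmem, hsum, hwA a₀ ha₀]
    ring
  have hscoreAB : ∀ u, ∀ a ∈ A ∪ B, score E u a = 0 := fun u a ha =>
    score_eq_zero_of_inEdges_eq_empty E u (hinAB a ha)
  have hscoreC : ∀ c ∈ C, score E w c = 1 := fun c hc =>
    score_eq_one E w (hinC c hc).1 fun e he => ((hinC c hc).2 e he).1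
  have hscoreC' : ∀ c ∈ C, score E w' c = 1 := fun c hc =>
    (score_update_of_ne E w hw' fun hvc : v = c => hvC (hvc ▸ hc)).trans (hscoreC c hc)
  have hrank : ∀ a ∈ A, rank E w a = #C + 1 := fun a ha => by
    rw [rank_eq_card_of_partition E w hpart (hscoreAB w) hscoreC (Finset.mem_union_left _ ha),
      if_pos (score_pos_of_sum_pos E w (by rw [hsum]; norm_num)),
      Finset.card_insert_of_notMem hvC]
  have hrank' : ∀ b ∈ B, rank E w' b = #C := fun b hb => by
    rw [rank_eq_card_of_partition E w' hpart (hscoreAB w') hscoreC' (Finset.mem_union_right _ hb),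
      if_neg (score_neg_of_sum_neg E w' (by rw [hsum']; linarith)).not_gt]
  subst hn
  have : Nonempty V := ⟨a₀⟩
  have hG := coincidence_le_of_forall_mem_not
    (I := fun x => (rank E w x : ℝ) < α * Fintype.card V) hp hcardA
    fun a ha => ⟨hpA a ha, by rw [hrank a ha]; push_cast; linarith⟩
  have hG' := coincidence_le_of_forall_mem
    (I := fun x => (rank E w' x : ℝ) < α * Fintype.card V) hp' hcardB
    fun b hb => ⟨hp'B b hb, by rw [hrank' b hb]; linarith⟩
  rw [show 1 - (1 - μ) * (1 - α) = α + μ * (1 - α) by ring] at hG'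
  exact ⟨hG, hG', (min_le_min hG hG').trans (min_one_sub_mul_add_mul_le α μ)⟩

/-- On the constructed pair of graphs (G, G'), if a symmetric IC probabilistic
mechanism assigns probability μ to every node of A in G and (by IC and symmetry) probability
μ to every node of B in G', then the coincidence of the mechanism with I_α(G) is at most
1 − μ(1−α), its coincidence with I_α(G') is at most α + μ(1−α), and hence the minimum of the
two coincidence values is at most (1+α)/2. -/
theorem impossibility_half_plus_alpha {V : Type*} [Fintype V] [DecidableEq V]
    (E : Finset (V × V)) (w w' : V × V → ℝ) (n : ℕ) (α : ℝ)
    (hn : Fintype.card V = n) (hn0 : 0 < n) (hα0 : 0 < α) (hα1 : α < 1)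
    (v : V) (A B C : Finset V)
    (hAB : Disjoint A B) (hAC : Disjoint A C) (hBC : Disjoint B C)
    (hvA : v ∉ A) (hvB : v ∉ B) (hvC : v ∉ C)
    (hpart : Finset.univ = insert v (A ∪ B ∪ C))
    (hcardA : (A.card : ℝ) = (1 - α) * n / 2) (hcardB : (B.card : ℝ) = (1 - α) * n / 2)
    (hcardC : (C.card : ℝ) = α * n - 1)
    (hinv : inEdges E v = (A ∪ B).image (fun a => (a, v)))
    (hinAB : ∀ a ∈ A ∪ B, inEdges E a = ∅)
    (hinC : ∀ c ∈ C, inEdges E c ≠ ∅ ∧ ∀ e ∈ inEdges E c, w e = 1 ∧ e.1 ∈ C)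
    (hwA : ∀ a ∈ A, w (a, v) = 1)
    (hwB : ∀ b ∈ B, w (b, v) = -1 + 1 / ((1 - α) * n))
    (a₀ : V) (ha₀ : a₀ ∈ A)
    (hw' : ∀ e, w' e = if e = (a₀, v) then -1 + 1 / ((1 - α) * n) else w e)
    (hlarge : 1 / ((1 - α) * n) < 3 / 2)
    (μ : ℝ) (hμ0 : 0 ≤ μ) (hμ1 : μ ≤ 1)
    (p p' : V → ℝ)
    (hp : ∀ x, 0 ≤ p x ∧ p x ≤ 1) (hp' : ∀ x, 0 ≤ p' x ∧ p' x ≤ 1)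
    (hpA : ∀ a ∈ A, p a = μ) (hp'B : ∀ b ∈ B, p' b = μ) :
    (1 / (n : ℝ)) * ∑ x : V, (2 * p x - 1) *
        (if (rank E w x : ℝ) < α * n then (1 : ℝ) else -1) ≤ 1 - μ * (1 - α) ∧
      (1 / (n : ℝ)) * ∑ x : V, (2 * p' x - 1) *
          (if (rank E w' x : ℝ) < α * n then (1 : ℝ) else -1) ≤ α + μ * (1 - α) ∧
      min ((1 / (n : ℝ)) * ∑ x : V, (2 * p x - 1) *
            (if (rank E w x : ℝ) < α * n then (1 : ℝ) else -1))
          ((1 / (n : ℝ)) * ∑ x : V, (2 * p' x - 1) *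
            (if (rank E w' x : ℝ) < α * n then (1 : ℝ) else -1))
        ≤ (1 + α) / 2 :=
  impossibility_half_plus_alpha_general E w w' n α hn v A B C hAB hvC hpart hcardA hcardB hcardC
    hinv hinAB hinC hwA hwB a₀ ha₀ hw' hlarge μ p p' hp hp' hpA hp'B
end

section
/- Let ε > 0, m ∈ (0,1], and suppose nonnegative reals μ_a^0, μ_a^1, …, μ_a^X and μ_b^0, …, μ_b^X in [0,1] satisfy μ_b^k = μ_a^{k+1} for 0 ≤ k < X and (mn+2k)μ_a^k − (mn−2k)μ_b^k − 2k ≥ εn for all 0 ≤ k ≤ X, where X = ⌈2m/ε⌉ and 2X ≤ mn. Then max_{1≤k≤X} μ_a^k ≥ εX/(m + 2X²/n), which exceeds 1 for n sufficiently large — a contradiction with μ_a^k ≤ 1. -/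
/-!
Sum the inequalities for `k = 1, …, X`. Since `μb k = μa (k + 1)`, consecutive terms telescope:
`μa k` survives with weight `(mn + 2k) - (mn - 2(k - 1)) = 4k - 2` (weight `mn + 2` for `k = 1`),
and the weights add up to `mn + 2X²`. Bounding every `μa k` by their maximum `M` gives
`εnX ≤ M (mn + 2X²)`, i.e. `M ≥ εX / (m + 2X²/n)`.
-/

open Finset

lemma sum_Icc_four_mul_sub_two (X : ℕ) :
    ∑ k ∈ Icc 1 X, (4 * (k : ℝ) - 2) = 2 * (X : ℝ) ^ 2 := by
  induction X with
  | zero => simp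
  | succ j ih =>
    rw [sum_Icc_succ_top (by omega), ih]
    push_cast
    ring

lemma sum_Icc_weighted_telescope (A : ℝ) (f g : ℕ → ℝ) {X : ℕ} (hX : 1 ≤ X)
    (hfg : ∀ k < X, g k = f (k + 1)) :
    ∑ k ∈ Icc 1 X, ((A + 2 * k) * f k - (A - 2 * k) * g k)
      = A * f 1 + ∑ k ∈ Icc 1 X, (4 * (k : ℝ) - 2) * f k - (A - 2 * X) * g X := by
  induction X, hX using Nat.le_induction with
  | base => simp only [Icc_self, sum_singleton, Nat.cast_one]; ring
  | succ j hj ih =>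
    rw [sum_Icc_succ_top (by omega), sum_Icc_succ_top (by omega),
      ih fun k hk => hfg k (by omega), hfg j (by omega)]
    push_cast
    ring

lemma card_mul_le_of_weighted_telescope {A c M : ℝ} {f g : ℕ → ℝ} {X : ℕ} (hX : 1 ≤ X)
    (hXA : 2 * (X : ℝ) ≤ A) (hfg : ∀ k < X, g k = f (k + 1)) (hg : 0 ≤ g X)
    (hf : ∀ k ∈ Icc 1 X, f k ≤ M)
    (h : ∀ k ∈ Icc 1 X, c ≤ (A + 2 * k) * f k - (A - 2 * k) * g k - 2 * k) :
    X * c ≤ M * (A + 2 * (X : ℝ) ^ 2) := by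
  have hA : 0 ≤ A := by linarith [(Nat.cast_nonneg X : (0 : ℝ) ≤ X)]
  have hsum : X * c ≤ ∑ k ∈ Icc 1 X, ((A + 2 * k) * f k - (A - 2 * k) * g k) := by
    have := card_nsmul_le_sum (Icc 1 X) (fun k : ℕ => (A + 2 * k) * f k - (A - 2 * k) * g k) c
      fun k hk => by linarith [h k hk, (Nat.cast_nonneg k : (0 : ℝ) ≤ k)]
    simpa using this
  have hweighted : ∑ k ∈ Icc 1 X, (4 * (k : ℝ) - 2) * f k ≤ M * (2 * (X : ℝ) ^ 2) := by
    rw [← sum_Icc_four_mul_sub_two, mul_sum]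
    refine sum_le_sum fun k hk => ?_
    have hk1 : (1 : ℝ) ≤ k := by exact_mod_cast (mem_Icc.mp hk).1
    rw [mul_comm M]
    exact mul_le_mul_of_nonneg_left (hf k hk) (by linarith)
  have hf1 : A * f 1 ≤ A * M := mul_le_mul_of_nonneg_left (hf 1 (by simp [hX])) hA
  have hrest : 0 ≤ (A - 2 * X) * g X := mul_nonneg (by linarith) hg
  rw [sum_Icc_weighted_telescope A f g hX hfg] at hsum
  linarith

theorem summation_argument_general (ε m : ℝ) (hε : 0 < ε) (hm0 : 0 < m)
    (n : ℕ) (X : ℕ) (hX : X = ⌈2 * m / ε⌉₊)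
    (hXn : 2 * (X : ℝ) ≤ m * n)
    (μa μb : ℕ → ℝ)
    (ha : ∀ k, 0 ≤ μa k ∧ μa k ≤ 1) (hb : ∀ k, 0 ≤ μb k ∧ μb k ≤ 1)
    (hab : ∀ k < X, μb k = μa (k + 1))
    (hineq : ∀ k ≤ X,
      (m * n + 2 * k) * μa k - (m * n - 2 * k) * μb k - 2 * k ≥ ε * n) :
    (∃ k, 1 ≤ k ∧ k ≤ X ∧ ε * X / (m + 2 * (X : ℝ) ^ 2 / n) ≤ μa k) ∧
      (m + 2 * (X : ℝ) ^ 2 / n < ε * X → False) := by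
  have hX1 : 1 ≤ X := hX ▸ Nat.one_le_ceil_iff.mpr (by positivity)
  have hn : (0 : ℝ) < n := pos_of_mul_pos_right
    (by linarith [(Nat.one_le_cast.mpr hX1 : (1 : ℝ) ≤ X)]) hm0.le
  obtain ⟨K, hK, hKmax⟩ := exists_max_image (Icc 1 X) μa ⟨1, by simp [hX1]⟩
  have hmain : X * (ε * n) ≤ μa K * (m * n + 2 * (X : ℝ) ^ 2) :=
    card_mul_le_of_weighted_telescope hX1 hXn hab (hb X).1 hKmax
      fun k hk => hineq k (mem_Icc.mp hk).2
  have hd : 0 < m + 2 * (X : ℝ) ^ 2 / n := by positivity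
  have hbound : ε * X / (m + 2 * (X : ℝ) ^ 2 / n) ≤ μa K := by
    rw [div_le_iff₀ hd, ← mul_le_mul_iff_of_pos_right hn]
    calc ε * X * n = X * (ε * n) := by ring
      _ ≤ μa K * (m * n + 2 * (X : ℝ) ^ 2) := hmain
      _ = μa K * (m + 2 * (X : ℝ) ^ 2 / n) * n := by field_simp
  refine ⟨⟨K, (mem_Icc.mp hK).1, (mem_Icc.mp hK).2, hbound⟩, fun hlt => ?_⟩
  linarith [(one_lt_div hd).mpr hlt, (ha K).2]

/-- the telescoping/summation argument from the large-Δ impossibility.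
If ε > 0, m ∈ (0,1], X = ⌈2m/ε⌉, 2X ≤ mn, and sequences μa, μb ∈ [0,1] satisfy
μb k = μa (k+1) for k < X and (mn+2k)·μa k − (mn−2k)·μb k − 2k ≥ εn for all k ≤ X,
then some μa k with 1 ≤ k ≤ X satisfies μa k ≥ εX/(m + 2X²/n); moreover this quantity
cannot exceed 1 (for n large it would, a contradiction with μa k ≤ 1). -/
theorem summation_argument (ε m : ℝ) (hε : 0 < ε) (hm0 : 0 < m) (hm1 : m ≤ 1)
    (n : ℕ) (hn : 0 < n) (X : ℕ) (hX : X = ⌈2 * m / ε⌉₊)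
    (hXn : 2 * (X : ℝ) ≤ m * n)
    (μa μb : ℕ → ℝ)
    (ha : ∀ k, 0 ≤ μa k ∧ μa k ≤ 1) (hb : ∀ k, 0 ≤ μb k ∧ μb k ≤ 1)
    (hab : ∀ k < X, μb k = μa (k + 1))
    (hineq : ∀ k ≤ X,
      (m * n + 2 * k) * μa k - (m * n - 2 * k) * μb k - 2 * k ≥ ε * n) :
    (∃ k, 1 ≤ k ∧ k ≤ X ∧ ε * X / (m + 2 * (X : ℝ) ^ 2 / n) ≤ μa k) ∧
      (m + 2 * (X : ℝ) ^ 2 / n < ε * X → False) :=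
  summation_argument_general ε m hε hm0 n X hX hXn μa μb ha hb hab hineq
end
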